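/- For any field K with more than two elements, there exist α, β, λ ∈ K∖{0} with α ≠ β and μ ∈ K such that the binary forms F₁ and F₂ of degree 8 are not equivalent under automorphisms of ℙ¹ fixing the point (0:1): there exist no a, d, e ∈ K∖{0} and c ∈ K such that F₁(a·u, c·u + d·v) = e·F₂(u,v) in K[u,v]. -/
import Mathlib


/-!  Formalization of a statement from "Two kinds of examples of curves with
isomorphic complements" (J. Blanc). -/

open MvPolynomial

noncomputable section

/-- The coefficients `c₀, …, c₇` (and `0` beyond index `7`):
`c₀ = 3α²β²`, `c₁ = 13α²β²μ`, `c₂ = 22α²β²μ²`, `c₃ = −3αβ(λ⁴(α+β) − 6αβμ³)`,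
`c₄ = −αβμ(8λ⁴β − 7αβμ³ + 6λ⁴α)`, `c₅ = −αβμ²(3λ⁴α − αβμ³ + 7λ⁴β)`,
`c₆ = λ⁴(λ⁴(αβ + α² + β²) − 2αβ²μ³)`, `c₇ = λ⁸β²μ`, with `a = α`, `b = β`,
`l = λ`, `m = μ`. -/
def cc (K : Type) [Field K] (a b l m : K) : ℕ → K
  | 0 => 3 * a ^ 2 * b ^ 2
  | 1 => 13 * a ^ 2 * b ^ 2 * m
  | 2 => 22 * a ^ 2 * b ^ 2 * m ^ 2
  | 3 => -(3 * a * b * (l ^ 4 * (a + b) - 6 * a * b * m ^ 3))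
  | 4 => -(a * b * m * (8 * l ^ 4 * b - 7 * a * b * m ^ 3 + 6 * l ^ 4 * a))
  | 5 => -(a * b * m ^ 2 * (3 * l ^ 4 * a - a * b * m ^ 3 + 7 * l ^ 4 * b))
  | 6 => l ^ 4 * (l ^ 4 * (a * b + a ^ 2 + b ^ 2) - 2 * a * b ^ 2 * m ^ 3)
  | 7 => l ^ 8 * b ^ 2 * m
  | _ => 0

/-- The binary octic form `F₁(u,v) = v·Σ_{i=0}^{7} cᵢ·uⁱ·v^{7−i}` in `K[u,v]`, with
`u = X 0`, `v = X 1`.  The form `F₂` is `F1 K b a l m`, i.e. `F₁` with the roles of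
`α` and `β` exchanged. -/
def F1 (K : Type) [Field K] (a b l m : K) : MvPolynomial (Fin 2) K :=
  X 1 * ∑ i ∈ Finset.range 8, C (cc K a b l m i) * (X 0) ^ i * (X 1) ^ (7 - i)

set_option maxHeartbeats 4000000 in
theorem statement12 (K : Type) [Field K] (hK : 2 < Cardinal.mk K) :
    ∃ a b l : K, a ≠ 0 ∧ b ≠ 0 ∧ l ≠ 0 ∧ a ≠ b ∧ ∃ m : K,
      ¬ ∃ (p d e c : K), p ≠ 0 ∧ d ≠ 0 ∧ e ≠ 0 ∧
        aeval ![C p * (X 0 : MvPolynomial (Fin 2) K), C c * X 0 + C d * X 1]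
            (F1 K a b l m)
          = C e * F1 K b a l m := by
  obtain ⟨t, ht0, ht1⟩ : ∃ t : K, t ≠ 0 ∧ t ≠ 1 := by
    by_contra hc
    push_neg at hc
    have hsub : (Set.univ : Set K) ⊆ {0, 1} := by
      intro x _
      rcases eq_or_ne x 0 with h | h
      · exact Or.inl h
      · exact Or.inr (hc x h)
    have h1 : Cardinal.mk K ≤ 2 := by
      calc Cardinal.mk K = Cardinal.mk (Set.univ : Set K) := Cardinal.mk_univ.symm
      _ ≤ Cardinal.mk ({0, 1} : Set K) := Cardinal.mk_le_mk_of_subset hsub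
      _ ≤ 2 := by
          refine le_trans Cardinal.mk_insert_le ?_
          simp [Cardinal.mk_singleton]
          norm_num
    exact absurd hK (not_lt.mpr h1)
  refine ⟨1, t, 1, one_ne_zero, ht0, one_ne_zero, fun hh => ht1 hh.symm, 1, ?_⟩
  rintro ⟨p, d, e, c, hp, hd, he, h⟩
  have hL : (MvPolynomial.aeval ![(Polynomial.X : Polynomial K), 1])
      ((MvPolynomial.aeval ![MvPolynomial.C p * MvPolynomial.X 0,
        MvPolynomial.C c * MvPolynomial.X 0 + MvPolynomial.C d * MvPolynomial.X 1])
        (F1 K 1 t 1 1)) = Polynomial.C ((3:K)*d^8*t^2) + Polynomial.C ((13:K)*p*d^7*t^2 + (24:K)*c*d^7*t^2) * Polynomial.X ^ 1 + Polynomial.C ((22:K)*p^2*d^6*t^2 + (91:K)*p*c*d^6*t^2 + (84:K)*c^2*d^6*t^2) * Polynomial.X ^ 2 + Polynomial.C ((15:K)*p^3*d^5*t^2 - (3:K)*p^3*d^5*t + (132:K)*p^2*c*d^5*t^2 + (273:K)*p*c^2*d^5*t^2 + (168:K)*c^3*d^5*t^2) * Polynomial.X ^ 3 + Polynomial.C (-p^4*d^4*t^2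 - (6:K)*p^4*d^4*t + (75:K)*p^3*c*d^4*t^2 - (15:K)*p^3*c*d^4*t + (330:K)*p^2*c^2*d^4*t^2 + (455:K)*p*c^3*d^4*t^2 + (210:K)*c^4*d^4*t^2) * Polynomial.X ^ 4 + Polynomial.C (-(6:K)*p^5*d^3*t^2 - (3:K)*p^5*d^3*t - (4:K)*p^4*c*d^3*t^2 - (24:K)*p^4*c*d^3*t + (150:K)*p^3*c^2*d^3*t^2 - (30:K)*p^3*c^2*d^3*t + (440:K)*p^2*c^3*d^3*t^2 + (455:K)*p*c^4*d^3*t^2 + (168:K)*c^5*d^3*t^2) * Polynomial.X ^ 5 + Polynomial.C (-p^6*d^2*t^2 + p^6*d^2*t + p^6*d^2 - (18:K)*p^5*c*d^2*t^2 - (9:K)*p^5*c*d^2*t - (6:K)*p^4*c^2*d^2*t^2 - (36:K)*p^4*c^2*d^2*t + (150:K)*p^3*c^3*d^2*t^2 - (30:K)*p^3*c^3*d^2*t + (330:K)*p^2*c^4*d^2*t^2 + (273:K)*p*c^5*d^2*t^2 + (84:K)*c^6*d^2*t^2) * Polynomial.X ^ 6 + Polynomial.C (p^7*d*t^2 - (2:K)*p^6*c*d*t^2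 + (2:K)*p^6*c*d*t + (2:K)*p^6*c*d - (18:K)*p^5*c^2*d*t^2 - (9:K)*p^5*c^2*d*t - (4:K)*p^4*c^3*d*t^2 - (24:K)*p^4*c^3*d*t + (75:K)*p^3*c^4*d*t^2 - (15:K)*p^3*c^4*d*t + (132:K)*p^2*c^5*d*t^2 + (91:K)*p*c^6*d*t^2 + (24:K)*c^7*d*t^2) * Polynomial.X ^ 7 + Polynomial.C (p^7*c*t^2 - p^6*c^2*t^2 + p^6*c^2*t + p^6*c^2 - (6:K)*p^5*c^3*t^2 - (3:K)*p^5*c^3*t - p^4*c^4*t^2 - (6:K)*p^4*c^4*t + (15:K)*p^3*c^5*t^2 - (3:K)*p^3*c^5*t + (22:K)*p^2*c^6*t^2 + (13:K)*p*c^7*t^2 + (3:K)*c^8*t^2) * Polynomial.X ^ 8 := by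
    simp only [F1, cc, Finset.sum_range_succ, Finset.sum_range_zero, zero_add, map_add, map_mul,
      map_pow, map_neg, map_sub, map_one, map_ofNat, aeval_X, aeval_C,
      Matrix.cons_val_zero, Matrix.cons_val_one, Matrix.head_cons,
      MvPolynomial.algebraMap_eq, Polynomial.algebraMap_eq]
    norm_num
    ring
  have hR : (MvPolynomial.aeval ![(Polynomial.X : Polynomial K), 1])
      (MvPolynomial.C e * F1 K t 1 1 1) = Polynomial.C ((3:K)*e*t^2) + Polynomial.C ((13:K)*e*t^2) * Polynomial.X ^ 1 + Polynomial.C ((22:K)*e*t^2) * Polynomial.X ^ 2 + Polynomial.C ((15:K)*e*t^2 - (3:K)*e*t) * Polynomial.X ^ 3 + Polynomial.C (e*t^2 - (8:K)*e*t) * Polynomial.X ^ 4 + Polynomial.C (-(2:K)*e*t^2 - (7:K)*e*t) * Polynomial.X ^ 5 + Polynomial.C (e*t^2 - e*t + e) * Polynomial.X ^ 6 + Polynomial.C (e) * Polynomial.X ^ 7 := by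
    simp only [F1, cc, Finset.sum_range_succ, Finset.sum_range_zero, zero_add, map_add, map_mul,
      map_pow, map_neg, map_sub, map_one, map_ofNat, aeval_X, aeval_C,
      Matrix.cons_val_zero, Matrix.cons_val_one, Matrix.head_cons,
      MvPolynomial.algebraMap_eq, Polynomial.algebraMap_eq]
    norm_num
    ring
  have hh : (Polynomial.C ((3:K)*d^8*t^2) + Polynomial.C ((13:K)*p*d^7*t^2 + (24:K)*c*d^7*t^2) * Polynomial.X ^ 1 + Polynomial.C ((22:K)*p^2*d^6*t^2 + (91:K)*p*c*d^6*t^2 + (84:K)*c^2*d^6*t^2) * Polynomial.X ^ 2 + Polynomial.C ((15:K)*p^3*d^5*t^2 - (3:K)*p^3*d^5*t + (132:K)*p^2*c*d^5*t^2 + (273:K)*p*c^2*d^5*t^2 + (168:K)*c^3*d^5*t^2) * Polynomial.X ^ 3 + Polynomial.C (-p^4*d^4*t^2 - (6:K)*p^4*d^4*t + (75:K)*p^3*c*d^4*t^2 - (15:K)*p^3*c*d^4*t + (330:K)*p^2*c^2*d^4*t^2 + (455:K)*p*c^3*d^4*t^2 + (210:K)*c^4*d^4*t^2) * Polynomial.X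 ^ 4 + Polynomial.C (-(6:K)*p^5*d^3*t^2 - (3:K)*p^5*d^3*t - (4:K)*p^4*c*d^3*t^2 - (24:K)*p^4*c*d^3*t + (150:K)*p^3*c^2*d^3*t^2 - (30:K)*p^3*c^2*d^3*t + (440:K)*p^2*c^3*d^3*t^2 + (455:K)*p*c^4*d^3*t^2 + (168:K)*c^5*d^3*t^2) * Polynomial.X ^ 5 + Polynomial.C (-p^6*d^2*t^2 + p^6*d^2*t + p^6*d^2 - (18:K)*p^5*c*d^2*t^2 - (9:K)*p^5*c*d^2*t - (6:K)*p^4*c^2*d^2*t^2 - (36:K)*p^4*c^2*d^2*t + (150:K)*p^3*c^3*d^2*t^2 - (30:K)*p^3*c^3*d^2*t + (330:K)*p^2*c^4*d^2*t^2 + (273:K)*p*c^5*d^2*t^2 + (84:K)*c^6*d^2*t^2) * Polynomial.X ^ 6 + Polynomial.C (p^7*d*t^2 - (2:K)*p^6*c*d*t^2 + (2:K)*p^6*c*d*t + (2:K)*p^6*c*d - (18:K)*p^5*c^2*d*t^2 - (9:K)*p^5*c^2*d*t - (4:K)*p^4*c^3*d*t^2 - (24:K)*p^4*c^3*d*t +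 (75:K)*p^3*c^4*d*t^2 - (15:K)*p^3*c^4*d*t + (132:K)*p^2*c^5*d*t^2 + (91:K)*p*c^6*d*t^2 + (24:K)*c^7*d*t^2) * Polynomial.X ^ 7 + Polynomial.C (p^7*c*t^2 - p^6*c^2*t^2 + p^6*c^2*t + p^6*c^2 - (6:K)*p^5*c^3*t^2 - (3:K)*p^5*c^3*t - p^4*c^4*t^2 - (6:K)*p^4*c^4*t + (15:K)*p^3*c^5*t^2 - (3:K)*p^3*c^5*t + (22:K)*p^2*c^6*t^2 + (13:K)*p*c^7*t^2 + (3:K)*c^8*t^2) * Polynomial.X ^ 8) = Polynomial.C ((3:K)*e*t^2) + Polynomial.C ((13:K)*e*t^2) * Polynomial.X ^ 1 + Polynomial.C ((22:K)*e*t^2) * Polynomial.X ^ 2 + Polynomial.C ((15:K)*e*t^2 - (3:K)*e*t) * Polynomial.X ^ 3 + Polynomial.C (e*t^2 - (8:K)*e*t) * Polynomial.X ^ 4 + Polynomial.C (-(2:K)*e*t^2 - (7:K)*e*t) * Polynomial.X ^ 5 + Polynomial.C (e*t^2 - e*t + e) * Polynomial.X ^ 6 + Polynomial.C (e) * Polynomial.X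 ^ 7 := by
    rw [← hL, ← hR]
    exact congrArg (MvPolynomial.aeval ![(Polynomial.X : Polynomial K), 1]) h
  have h0 := congrArg (fun P : Polynomial K => P.coeff 0) hh
  have h1 := congrArg (fun P : Polynomial K => P.coeff 1) hh
  have h2 := congrArg (fun P : Polynomial K => P.coeff 2) hh
  have h3 := congrArg (fun P : Polynomial K => P.coeff 3) hh
  have h4 := congrArg (fun P : Polynomial K => P.coeff 4) hh
  have h5 := congrArg (fun P : Polynomial K => P.coeff 5) hh
  have h6 := congrArg (fun P : Polynomial K => P.coeff 6) hh
  have h7 := congrArg (fun P : Polynomial K => P.coeff 7) hh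
  have h8 := congrArg (fun P : Polynomial K => P.coeff 8) hh
  simp only [Polynomial.coeff_add, Polynomial.coeff_C_mul, Polynomial.coeff_X_pow,
    Polynomial.coeff_C, Polynomial.mul_coeff_zero] at h0 h1 h2 h3 h4 h5 h6 h7 h8
  norm_num at h0 h1 h2 h3 h4 h5 h6 h7 h8
  have hts : t - 1 ≠ 0 := sub_ne_zero.mpr ht1
  have hst : (1 : K) - t ≠ 0 := sub_ne_zero.mpr (Ne.symm ht1)
  have cancel : ∀ A B : K, A ≠ 0 → A * B = 0 → B = 0 := by
    intro A B hA hAB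
    rcases mul_eq_zero.mp hAB with h' | h'
    · exact absurd h' hA
    · exact h'
  by_cases H2 : (2 : K) = 0
  · have h3ne : (3 : K) ≠ 0 := fun hz => one_ne_zero (α := K) (by linear_combination hz - H2)
    have hE : e = d ^ 8 := by
      rcases h0 with (h' | h') | h'
      · exact h'.symm
      · exact absurd h' h3ne
      · exact absurd h' ht0
    have hx1 : t ^ 2 * d ^ 7 * (p - d) = 0 := by linear_combination h1 - (-(13:K)*t^2)*hE - ((6:K)*p*d^7*t^2 + (12:K)*c*d^7*t^2 - (6:K)*d^8*t^2)*H2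
    have hpd : p = d := sub_eq_zero.mp
      (cancel _ _ (mul_ne_zero (pow_ne_zero 2 ht0) (pow_ne_zero 7 hd)) hx1)
    have hx2 : t ^ 2 * d ^ 4 * c ^ 4 = 0 := by linear_combination h5 - ((2:K)*t^2 + (7:K)*t)*hE - (-(6:K)*p^4*d^3*t^2 - (3:K)*p^4*d^3*t - (4:K)*p^3*c*d^3*t^2 - (24:K)*p^3*c*d^3*t - (6:K)*p^3*d^4*t^2 - (3:K)*p^3*d^4*t + (150:K)*p^2*c^2*d^3*t^2 - (30:K)*p^2*c^2*d^3*t - (4:K)*p^2*c*d^4*t^2 - (24:K)*p^2*c*d^4*t - (6:K)*p^2*d^5*t^2 - (3:K)*p^2*d^5*t + (440:K)*p*c^3*d^3*t^2 + (150:K)*p*c^2*d^4*t^2 - (30:K)*p*c^2*d^4*t - (4:K)*p*c*d^5*t^2 - (24:K)*p*c*d^5*t - (6:K)*p*d^6*t^2 - (3:K)*p*d^6*t + (455:K)*c^4*d^3*t^2 + (440:K)*c^3*d^4*t^2 + (150:K)*c^2*d^5*t^2 - (30:K)*c^2*d^5*t - (4:K)*c*d^6*t^2 - (24:K)*c*d^6*t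 - (6:K)*d^7*t^2 - (3:K)*d^7*t)*hpd - ((84:K)*c^5*d^3*t^2 + (227:K)*c^4*d^4*t^2 + (220:K)*c^3*d^5*t^2 + (75:K)*c^2*d^6*t^2 - (15:K)*c^2*d^6*t - (2:K)*c*d^7*t^2 - (12:K)*c*d^7*t - (2:K)*d^8*t^2 + (2:K)*d^8*t)*H2
    have hc0 : c = 0 := by
      have h4 := cancel _ _ (mul_ne_zero (pow_ne_zero 2 ht0) (pow_ne_zero 4 hd)) hx2
      exact pow_eq_zero_iff (by norm_num) |>.mp h4
    have hx3 : (t - 1) ^ 2 * d ^ 8 = 0 := by linear_combination h7 - (-(1:K))*hE - (p^6*d*t^2 - (2:K)*p^5*c*d*t^2 + (2:K)*p^5*c*d*t + (2:K)*p^5*c*d + p^5*d^2*t^2 - (18:K)*p^4*c^2*d*t^2 - (9:K)*p^4*c^2*d*t - (2:K)*p^4*c*d^2*t^2 + (2:K)*p^4*c*d^2*t + (2:K)*p^4*c*d^2 + p^4*d^3*t^2 - (4:K)*p^3*c^3*d*t^2 - (24:K)*p^3*c^3*d*t - (18:K)*p^3*c^2*d^2*t^2 - (9:K)*p^3*c^2*d^2*t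 - (2:K)*p^3*c*d^3*t^2 + (2:K)*p^3*c*d^3*t + (2:K)*p^3*c*d^3 + p^3*d^4*t^2 + (75:K)*p^2*c^4*d*t^2 - (15:K)*p^2*c^4*d*t - (4:K)*p^2*c^3*d^2*t^2 - (24:K)*p^2*c^3*d^2*t - (18:K)*p^2*c^2*d^3*t^2 - (9:K)*p^2*c^2*d^3*t - (2:K)*p^2*c*d^4*t^2 + (2:K)*p^2*c*d^4*t + (2:K)*p^2*c*d^4 + p^2*d^5*t^2 + (132:K)*p*c^5*d*t^2 + (75:K)*p*c^4*d^2*t^2 - (15:K)*p*c^4*d^2*t - (4:K)*p*c^3*d^3*t^2 - (24:K)*p*c^3*d^3*t - (18:K)*p*c^2*d^4*t^2 - (9:K)*p*c^2*d^4*t - (2:K)*p*c*d^5*t^2 + (2:K)*p*c*d^5*t + (2:K)*p*c*d^5 + p*d^6*t^2 + (91:K)*c^6*d*t^2 + (132:K)*c^5*d^2*t^2 + (75:K)*c^4*d^3*t^2 - (15:K)*c^4*d^3*t - (4:K)*c^3*d^4*t^2 - (24:K)*c^3*d^4*t - (18:K)*c^2*d^5*t^2 - (9:K)*c^2*d^5*t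 - (2:K)*c*d^6*t^2 + (2:K)*c*d^6*t + (2:K)*c*d^6 + d^7*t^2)*hpd - ((24:K)*c^6*d*t^2 + (91:K)*c^5*d^2*t^2 + (132:K)*c^4*d^3*t^2 + (75:K)*c^3*d^4*t^2 - (15:K)*c^3*d^4*t - (4:K)*c^2*d^5*t^2 - (24:K)*c^2*d^5*t - (18:K)*c*d^6*t^2 - (9:K)*c*d^6*t - (2:K)*d^7*t^2 + (2:K)*d^7*t + (2:K)*d^7)*hc0 - (d^8*t - d^8)*H2
    exact (mul_ne_zero (pow_ne_zero 2 hts) (pow_ne_zero 8 hd)) hx3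
  by_cases H3 : (3 : K) = 0
  · have hx1 : t ^ 2 * (p * d ^ 7 - e) = 0 := by linear_combination h1 - ((4:K)*p*d^7*t^2 + (8:K)*c*d^7*t^2 - (4:K)*e*t^2)*H3
    have hE : e = p * d ^ 7 := (sub_eq_zero.mp (cancel _ _ (pow_ne_zero 2 ht0) hx1)).symm
    have hx2 : t ^ 2 * p * d ^ 6 * (c - (d - p)) = 0 := by linear_combination h2 - (-(22:K)*t^2)*hE - ((7:K)*p^2*d^6*t^2 + (30:K)*p*c*d^6*t^2 - (7:K)*p*d^7*t^2 + (28:K)*c^2*d^6*t^2)*H3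
    have hc3 : c = d - p := sub_eq_zero.mp (cancel _ _
      (mul_ne_zero (mul_ne_zero (pow_ne_zero 2 ht0) hp) (pow_ne_zero 6 hd)) hx2)
    have hx3 : t * (t - 1) * (p * d ^ 7) = 0 := by linear_combination h4 - (-t^2 + (8:K)*t)*hE - (-(10:K)*p^3*d^4*t^2 - (15:K)*p^3*d^4*t + (85:K)*p^2*c*d^4*t^2 + (50:K)*p^2*d^5*t^2 + (245:K)*p*c^2*d^4*t^2 + (35:K)*p*c*d^5*t^2 - (175:K)*p*d^6*t^2 + (210:K)*c^3*d^4*t^2 + (210:K)*c^2*d^5*t^2 + (210:K)*c*d^6*t^2 + (210:K)*d^7*t^2)*hc3 - ((3:K)*p^4*d^4*t^2 + (3:K)*p^4*d^4*t - (20:K)*p^3*d^5*t^2 - (5:K)*p^3*d^5*t + (75:K)*p^2*d^6*t^2 - (129:K)*p*d^7*t^2 + (3:K)*p*d^7*t + (70:K)*d^8*t^2)*H3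
    exact (mul_ne_zero (mul_ne_zero ht0 hts) (mul_ne_zero hp (pow_ne_zero 7 hd))) hx3
  have hE : e = d ^ 8 := by
    rcases h0 with (h' | h') | h'
    · exact h'.symm
    · exact absurd h' H3
    · exact absurd h' ht0
  have hxS : t ^ 2 * d ^ 7 * (24 * c + 13 * p - 13 * d) = 0 := by
    linear_combination h1 - (-(13:K)*t^2)*hE
  have hS : 24 * c + 13 * p - 13 * d = 0 :=
    cancel _ _ (mul_ne_zero (pow_ne_zero 2 ht0) (pow_ne_zero 7 hd)) hxS
  by_cases H127 : (127 : K) = 0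
  · have hx : (t - 1) * d ^ 10 = 0 := by linear_combination (-(41:K)*p^2*t^2 - (14:K)*p^2*t - (27:K)*p^2 + (46:K)*p*d*t^2 + (46:K)*p*d*t - (3:K)*p*d + (11:K)*d^2*t^2 + (20:K)*d^2*t - (17:K)*d^2)*h3 + ((12:K)*p^2*t^2 - (61:K)*p^2*t + (3:K)*p^2 - (18:K)*p*d*t^2 - (32:K)*p*d*t - (46:K)*p*d + d^2*t^2 + (27:K)*d^2*t + (31:K)*d^2)*h4 + ((11:K)*p^2*t^2 - (39:K)*p^2*t + (53:K)*p^2 - (11:K)*p*d*t - (22:K)*p*d - (57:K)*d^2*t^2 + (20:K)*d^2*t + (54:K)*d^2)*h5 + (-(2:K)*p^2*t^2 + (60:K)*p^2*t + (40:K)*p*d*t^2 - (30:K)*p*d*t + (54:K)*p*d + (8:K)*d^2*t^2 + (12:K)*d^2*t - (54:K)*d^2)*h6 + ((25:K)*p*d*t^2 + (61:K)*p*d*t - (54:K)*p*d + (55:K)*d^2)*h7 + (-(4:K)*d^2)*h8 + (-(627:K)*p^2*t^4 - (181:K)*p^2*t^3 + (233:K)*p^2*t^2 - (254:K)*p^2*t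 + (712:K)*p*d*t^4 + (616:K)*p*d*t^3 + (297:K)*p*d*t^2 + (508:K)*p*d*t + (288:K)*d^2*t^4 + (649:K)*d^2*t^3 - (806:K)*d^2*t^2 - (509:K)*d^2*t + d^2)*hE + (-(18329268620880:K)*p^7*d^2*t^4 - (38495891537820:K)*p^7*d^2*t^3 + (29580287079240:K)*p^7*d^2*t^2 + (818801820:K)*p^7*d^2*t + (678861800820:K)*p^6*c*d^2*t^4 + (1425773764440:K)*p^6*c*d^2*t^3 - (1095566187240:K)*p^6*c*d^2*t^2 - (30326040:K)*p^6*c*d^2*t + (360:K)*p^6*c*d^2 + (116199667586070:K)*p^6*d^3*t^4 + (239844087242910:K)*p^6*d^3*t^3 - (207085130541270:K)*p^6*d^3*t^2 - (3244139820:K)*p^6*d^3*t - (180:K)*p^6*d^3 - (25143028200:K)*p^5*c^2*d^2*t^4 - (52806430350:K)*p^5*c^2*d^2*t^3 + (40576531230:K)*p^5*c^2*d^2*t^2 + (1121580:K)*p^5*c^2*d^2*t - (3624829588710:K)*p^5*c*d^3*t^4 - (7457340578130:K)*p^5*c*d^3*t^3 + (6574253462730:K)*p^5*c*d^3*t^2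 + (89832780:K)*p^5*c*d^3*t - (305960662470060:K)*p^5*d^4*t^4 - (621003905137080:K)*p^5*d^4*t^3 + (620424031801950:K)*p^5*d^4*t^2 + (4811006610:K)*p^5*d^4*t + (931224600:K)*p^4*c^3*d^2*t^4 + (1955766330:K)*p^4*c^3*d^2*t^3 - (1502824410:K)*p^4*c^3*d^2*t^2 - (45900:K)*p^4*c^3*d^2*t + (109109914830:K)*p^4*c^2*d^3*t^4 + (223391393640:K)*p^4*c^2*d^3*t^3 - (202914367380:K)*p^4*c^2*d^3*t^2 - (2192130:K)*p^4*c^2*d^3*t + (7707046796550:K)*p^4*c*d^4*t^4 + (15542804073240:K)*p^4*c*d^4*t^3 - (16404414389640:K)*p^4*c*d^4*t^2 - (88355880:K)*p^4*c*d^4*t + (428012154386640:K)*p^4*d^5*t^4 + (854009973107640:K)*p^4*d^5*t^3 - (1031707190359440:K)*p^4*d^5*t^2 - (3170709090:K)*p^4*d^5*t - (34493850:K)*p^3*c^4*d^2*t^4 - (72515790:K)*p^3*c^4*d^2*t^3 + (55676700:K)*p^3*c^4*d^2*t^2 - (1080:K)*p^3*c^4*d^2*t - (3109919490:K)*p^3*c^3*d^3*t^4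 - (6317912790:K)*p^3*c^3*d^3*t^3 + (6012415530:K)*p^3*c^3*d^3*t^2 + (45090:K)*p^3*c^3*d^3*t - (176336275860:K)*p^3*c^2*d^4*t^4 - (352267942680:K)*p^3*c^2*d^4*t^3 + (404656542900:K)*p^3*c^2*d^4*t^2 + (1071630:K)*p^3*c^2*d^4*t - (8145255195990:K)*p^3*c*d^5*t^4 - (16087194921780:K)*p^3*c*d^5*t^3 + (21806963055180:K)*p^3*c*d^5*t^2 + (29079810:K)*p^3*c*d^5*t - (334919037236040:K)*p^3*d^6*t^4 - (655534530816570:K)*p^3*d^6*t^3 + (1029038810842440:K)*p^3*d^6*t^2 + (785196720:K)*p^3*d^6*t + (1268370:K)*p^2*c^5*d^2*t^4 + (2604330:K)*p^2*c^5*d^2*t^3 - (2038140:K)*p^2*c^5*d^2*t^2 + (80627670:K)*p^2*c^4*d^3*t^4 + (161573130:K)*p^2*c^4*d^3*t^3 - (167158890:K)*p^2*c^4*d^3*t^2 + (3421031490:K)*p^2*c^3*d^4*t^4 + (6729151500:K)*p^2*c^3*d^4*t^3 - (8974807920:K)*p^2*c^3*d^4*t^2 + (125339928120:K)*p^2*c^2*d^5*t^4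 + (243554123700:K)*p^2*c^2*d^5*t^3 - (403008705270:K)*p^2*c^2*d^5*t^2 + (4259153570040:K)*p^2*c*d^6*t^4 + (8191861748190:K)*p^2*c*d^6*t^3 - (16305585499620:K)*p^2*c*d^6*t^2 + (138211225627230:K)*p^2*d^7*t^4 + (263336938136460:K)*p^2*d^7*t^3 - (616024089720090:K)*p^2*d^7*t^2 - (54000:K)*p*c^6*d^2*t^4 - (131760:K)*p*c^6*d^2*t^3 + (92160:K)*p*c^6*d^2*t^2 - (1760400:K)*p*c^5*d^3*t^4 - (3330720:K)*p*c^5*d^3*t^3 + (4049910:K)*p*c^5*d^3*t^2 - (46094400:K)*p*c^4*d^4*t^4 - (87608520:K)*p*c^4*d^4*t^3 + (165332070:K)*p*c^4*d^4*t^2 - (1221054210:K)*p*c^3*d^5*t^4 - (2291344560:K)*p*c^3*d^5*t^3 + (5951446110:K)*p*c^3*d^5*t^2 - (32406543360:K)*p*c^2*d^6*t^4 - (59848234830:K)*p*c^2*d^6*t^3 + (200901837420:K)*p*c^2*d^6*t^2 - (859780717290:K)*p*c*d^7*t^4 - (1561358191590:K)*p*c*d^7*t^3 + (6510121534530:K)*p*c*d^7*t^2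 - (22803781326930:K)*p*d^8*t^4 - (40683965886990:K)*p*d^8*t^3 + (205089112107810:K)*p*d^8*t^2 + (1080:K)*c^7*d^2*t^2 - (89640:K)*c^6*d^3*t^2 - (60480:K)*c^5*d^4*t^4 - (90720:K)*c^5*d^4*t^3 - (2012040:K)*c^5*d^4*t^2 - (771120:K)*c^4*d^5*t^4 - (2751840:K)*c^4*d^5*t^3 - (55141560:K)*c^4*d^5*t^2 - (20839140:K)*c^3*d^6*t^4 - (74809980:K)*c^3*d^6*t^3 - (1489408020:K)*c^3*d^6*t^2 - (562823100:K)*c^2*d^7*t^4 - (2020171860:K)*c^2*d^7*t^3 - (40213759500:K)*c^2*d^7*t^2 - (15196223700:K)*c*d^8*t^4 - (54544640220:K)*c*d^8*t^3 - (1085771506500:K)*c*d^8*t^2 - (410298039900:K)*d^9*t^4 - (1472705285940:K)*d^9*t^3 - (29315830675500:K)*d^9*t^2)*hS - (-(1876224347019:K)*p^8*d^2*t^4 - (3940524330643:K)*p^8*d^2*t^3 + (3027903401812:K)*p^8*d^2*t^2 + (83814360:K)*p^8*d^2*t - (3394309003862:K)*p^7*c*d^2*t^4 - (7128868802922:K)*p^7*c*d^2*t^3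 + (5477830940688:K)*p^7*c*d^2*t^2 + (151629962:K)*p^7*c*d^2*t + (36:K)*p^7*c*d^2 + (13770678509372:K)*p^7*d^3*t^4 + (28491493890943:K)*p^7*d^3*t^3 - (24225593929660:K)*p^7*d^3*t^2 - (415891665:K)*p^7*d^3*t - (18:K)*p^7*d^3 + (125715148446:K)*p^6*c^2*d^2*t^4 + (264032179137:K)*p^6*c^2*d^2*t^3 - (202882626689:K)*p^6*c^2*d^2*t^2 - (5616094:K)*p^6*c^2*d^2*t + (68:K)*p^6*c^2*d^2 + (21518456960638:K)*p^6*c*d^3*t^4 + (44415571711626:K)*p^6*c*d^3*t^3 - (38349098248354:K)*p^6*c*d^3*t^2 - (600766084:K)*p^6*c*d^3*t - (70:K)*p^6*c*d^3 - (43213262131730:K)*p^6*d^4*t^4 - (88118298432597:K)*p^6*d^4*t^3 + (84705662287106:K)*p^6*d^4*t^2 + (824542548:K)*p^6*d^4*t + (18:K)*p^6*d^4 - (4656116200:K)*p^5*c^3*d^2*t^4 - (9778971322:K)*p^5*c^3*d^2*t^3 + (7514173458:K)*p^5*c^3*d^2*t^2 + (207264:K)*p^5*c^3*d^2*t - (671264739120:K)*p^5*c^2*d^3*t^4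 - (1380988993470:K)*p^5*c^2*d^3*t^3 + (1217454341988:K)*p^5*c^2*d^3*t^2 + (16637043:K)*p^5*c^2*d^3*t - (56659381939152:K)*p^5*c*d^4*t^4 - (115000723171867:K)*p^5*c*d^4*t^3 + (114893339221798:K)*p^5*c*d^4*t^2 + (890926827:K)*p^5*c*d^4*t + (75131075741235:K)*p^5*d^5*t^4 + (150985672576232:K)*p^5*d^5*t^3 - (169115794394477:K)*p^5*d^5*t^2 - (817026015:K)*p^5*d^5*t + (172448595:K)*p^4*c^4*d^2*t^4 + (362170950:K)*p^4*c^4*d^2*t^3 - (278299163:K)*p^4*c^4*d^2*t^2 - (8778:K)*p^4*c^4*d^2*t + (20205536170:K)*p^4*c^3*d^3*t^4 + (41368784220:K)*p^4*c^3*d^3*t^3 - (37576745400:K)*p^4*c^3*d^3*t^2 - (404970:K)*p^4*c^3*d^3*t + (1427230886946:K)*p^4*c^2*d^4*t^4 + (2878297057980:K)*p^4*c^2*d^4*t^3 - (3037854515904:K)*p^4*c^2*d^4*t^2 - (16363068:K)*p^4*c^2*d^4*t + (79261510073778:K)*p^4*c*d^5*t^4 + (158149995020830:K)*p^4*c*d^5*t^3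 - (191056887101190:K)*p^4*c*d^5*t^2 - (587168148:K)*p^4*c*d^5*t - (78095318827513:K)*p^4*d^6*t^4 - (154520303551293:K)*p^4*d^6*t^3 + (210942504060032:K)*p^4*d^6*t^2 + (404935239:K)*p^4*d^6*t - (6388668:K)*p^3*c^5*d^2*t^4 - (13436994:K)*p^3*c^5*d^2*t^3 + (10312896:K)*p^3*c^5*d^2*t^2 - (204:K)*p^3*c^5*d^2*t - (575917085:K)*p^3*c^4*d^3*t^4 - (1169974635:K)*p^3*c^4*d^3*t^3 + (1113394930:K)*p^3*c^4*d^3*t^2 + (8625:K)*p^3*c^4*d^3*t - (32654868120:K)*p^3*c^3*d^4*t^4 - (65234793855:K)*p^3*c^3*d^4*t^3 + (74936402425:K)*p^3*c^3*d^4*t^2 + (197910:K)*p^3*c^3*d^4*t - (1508380583289:K)*p^3*c^2*d^5*t^4 - (2979110167476:K)*p^3*c^2*d^5*t^3 + (4038326496717:K)*p^3*c^2*d^5*t^2 + (5385690:K)*p^3*c^2*d^5*t - (62022043934649:K)*p^3*c*d^6*t^4 - (121395283487244:K)*p^3*c*d^6*t^3 + (190562742748092:K)*p^3*c*d^6*t^2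 + (145406955:K)*p^3*c*d^6*t + (48430656828525:K)*p^3*d^7*t^4 + (94057709420391:K)*p^3*d^7*t^3 - (168392265411915:K)*p^3*d^7*t^2 - (80374467:K)*p^3*d^7*t + (234181:K)*p^2*c^6*d^2*t^4 + (478753:K)*p^2*c^6*d^2*t^3 - (375766:K)*p^2*c^6*d^2*t^2 + (14926794:K)*p^2*c^5*d^3*t^4 + (29925864:K)*p^2*c^5*d^3*t^3 - (30965652:K)*p^2*c^5*d^3*t^2 + (633522630:K)*p^2*c^4*d^4*t^4 + (1246143785:K)*p^2*c^4*d^4*t^3 - (1661992400:K)*p^2*c^4*d^4*t^2 + (23211111186:K)*p^2*c^3*d^5*t^4 + (45102618204:K)*p^2*c^3*d^5*t^3 - (74631241148:K)*p^2*c^3*d^5*t^2 + (788732138304:K)*p^2*c^2*d^6*t^4 + (1517011427694:K)*p^2*c^2*d^6*t^3 - (3019552873437:K)*p^2*c^2*d^6*t^2 + (25594671411966:K)*p^2*c*d^7*t^4 + (48766099654020:K)*p^2*c*d^7*t^3 - (114078535132602:K)*p^2*c*d^7*t^2 - (16481851105539:K)*p^2*d^8*t^4 - (31120250018147:K)*p^2*d^8*t^3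 + (84050957667421:K)*p^2*d^8*t^2 + (2:K)*p^2*d^8*t - (10200:K)*p*c^7*d^2*t^4 - (24888:K)*p*c^7*d^2*t^3 + (17516:K)*p*c^7*d^2*t^2 - (327120:K)*p*c^6*d^3*t^4 - (615960:K)*p*c^6*d^3*t^3 + (746803:K)*p*c^6*d^3*t^2 - (8536728:K)*p*c^5*d^4*t^4 - (16224276:K)*p*c^5*d^4*t^3 + (30623196:K)*p*c^5*d^4*t^2 - (226111245:K)*p*c^4*d^5*t^4 - (424323860:K)*p*c^4*d^5*t^3 + (1102114680:K)*p*c^4*d^5*t^2 - (6001214461:K)*p*c^3*d^6*t^4 - (11083013121:K)*p*c^3*d^6*t^3 + (37204039433:K)*p*c^3*d^6*t^2 - (159218652351:K)*p*c^2*d^7*t^4 - (289140407670:K)*p*c^2*d^7*t^3 + (1205578063497:K)*p*c^2*d^7*t^2 - (4222922467950:K)*p*c*d^8*t^4 - (7534067756850:K)*p*c*d^8*t^3 + (37979465205150:K)*p*c*d^8*t^2 + (2292246320714:K)*p*d^9*t^4 + (4013751085142:K)*p*d^9*t^3 - (23994206741601:K)*p*d^9*t^2 - (4:K)*p*d^9*t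 + (204:K)*c^8*d^2*t^2 - (17040:K)*c^7*d^3*t^2 - (11424:K)*c^6*d^4*t^4 - (17136:K)*c^6*d^4*t^3 - (371088:K)*c^6*d^4*t^2 - (139608:K)*c^5*d^5*t^4 - (510720:K)*c^5*d^5*t^3 - (10214424:K)*c^5*d^5*t^2 - (3859170:K)*c^4*d^6*t^4 - (13855590:K)*c^4*d^6*t^3 - (275818470:K)*c^4*d^6*t^2 - (104227116:K)*c^3*d^7*t^4 - (374107020:K)*c^3*d^7*t^3 - (7446991548:K)*c^3*d^7*t^2 - (2814115500:K)*c^2*d^8*t^4 - (10100859300:K)*c^2*d^8*t^3 - (201068797500:K)*c^2*d^8*t^2 - (75981118500:K)*c*d^9*t^4 - (272723201100:K)*c*d^9*t^3 - (5428857532500:K)*c*d^9*t^2 + (41999011956:K)*d^10*t^4 + (150749359973:K)*d^10*t^3 + (3000833061278:K)*d^10*t^2 + (4:K)*d^10*t)*H127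
    exact (mul_ne_zero hts (pow_ne_zero 10 hd)) hx
  have hx2 : 127 * (t ^ 2 * d ^ 6) * ((d - p) * (d + p)) = 0 := by
    linear_combination (48:K)*h2 - (-(1056:K)*t^2)*hE - ((91:K)*p*d^6*t^2 + (168:K)*c*d^6*t^2 + (91:K)*d^7*t^2)*hS
  have hdp : (d - p) * (d + p) = 0 := cancel _ _
    (mul_ne_zero H127 (mul_ne_zero (pow_ne_zero 2 ht0) (pow_ne_zero 6 hd))) hx2
  rcases mul_eq_zero.mp hdp with hca | hca
  · have hpd : p = d := (sub_eq_zero.mp hca).symm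
    have hxc : (24 : K) * c = 0 := by linear_combination hS - 13 * hpd
    have h24 : (24 : K) ≠ 0 := by
      have h24e : (24 : K) = 2 ^ 3 * 3 := by norm_num
      rw [h24e]
      exact mul_ne_zero (pow_ne_zero 3 H2) H3
    have hc0 : c = 0 := cancel _ _ h24 hxc
    have hx3 : 2 * (t * d ^ 8 * (1 - t)) = 0 := by linear_combination h6 - (-t^2 + t - (1:K))*hE - (-(18:K)*p^5*d^2*t^2 - (9:K)*p^5*d^2*t - (6:K)*p^4*c*d^2*t^2 - (36:K)*p^4*c*d^2*t + (150:K)*p^3*c^2*d^2*t^2 - (30:K)*p^3*c^2*d^2*t + (330:K)*p^2*c^3*d^2*t^2 + (273:K)*p*c^4*d^2*t^2 + (84:K)*c^5*d^2*t^2)*hc0 - (-p^5*d^2*t^2 + p^5*d^2*t + p^5*d^2 - p^4*d^3*t^2 + p^4*d^3*t + p^4*d^3 - p^3*d^4*t^2 + p^3*d^4*t + p^3*d^4 - p^2*d^5*t^2 + p^2*d^5*t + p^2*d^5 - p*d^6*t^2 + p*d^6*t + p*d^6 - d^7*t^2 + d^7*t + d^7)*hpd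
    exact (mul_ne_zero H2 (mul_ne_zero (mul_ne_zero ht0 (pow_ne_zero 8 hd)) hst)) hx3
  · have hpd : p = -d := by linear_combination hca
    have hxc : 2 * (12 * c - 13 * d) = 0 := by linear_combination hS - 13 * hpd
    have hc1 : 12 * c = 13 * d := sub_eq_zero.mp (cancel _ _ H2 hxc)
    have hx3 : (221184 : K) * (t * d ^ 8) = 0 := by linear_combination (-56016:K)*h3 + (974592:K)*h4 - (1886976:K)*h5 + (2488320:K)*h6 - (-(6396624:K)*t^2 - (3091824:K)*t - (2488320:K))*hE - (-(2488320:K)*p^5*d^2*t^2 + (2488320:K)*p^5*d^2*t + (2488320:K)*p^5*d^2 - (44789760:K)*p^4*c*d^2*t^2 - (22394880:K)*p^4*c*d^2*t + (13810176:K)*p^4*d^3*t^2 + (3172608:K)*p^4*d^3*t - (2488320:K)*p^4*d^3 - (14929920:K)*p^3*c^2*d^2*t^2 - (89579520:K)*p^3*c^2*d^2*t + (52337664:K)*p^3*c*d^3*t^2 + (67682304:K)*p^3*c*d^3*t - (14784768:K)*p^3*d^4*t^2 - (9020160:K)*p^3*d^4*t + (2488320:K)*p^3*d^4 + (373248000:K)*p^2*c^3*d^2*t^2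 - (74649600:K)*p^2*c^3*d^2*t - (268116480:K)*p^2*c^2*d^3*t^2 + (146188800:K)*p^2*c^2*d^3*t + (20756736:K)*p^2*c*d^4*t^2 - (82301184:K)*p^2*c*d^4*t + (13944528:K)*p^2*d^5*t^2 + (9188208:K)*p^2*d^5*t - (2488320:K)*p^2*d^5 + (821145600:K)*p*c^4*d^2*t^2 - (1203517440:K)*p*c^3*d^3*t^2 + (74649600:K)*p*c^3*d^3*t + (589731840:K)*p*c^2*d^4*t^2 - (146188800:K)*p*c^2*d^4*t - (28150848:K)*p*c*d^5*t^2 + (82301184:K)*p*c*d^5*t - (13944528:K)*p*d^6*t^2 - (9188208:K)*p*d^6*t + (2488320:K)*p*d^6 + (679311360:K)*c^5*d^2*t^2 - (1679719680:K)*c^4*d^3*t^2 + (1646956800:K)*c^3*d^4*t^2 - (74649600:K)*c^3*d^4*t - (605024208:K)*c^2*d^5*t^2 + (146188800:K)*c^2*d^5*t + (28150848:K)*c*d^6*t^2 - (82301184:K)*c*d^6*t + (13944528:K)*d^7*t^2 + (9188208:K)*d^7*t - (2488320:K)*d^7)*hpd - ((17418240:K)*c^5*d^2*t^2 - (64157184:K)*c^4*d^3*t^2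 + (87528384:K)*c^3*d^4*t^2 - (43208208:K)*c^2*d^5*t^2 + (6220800:K)*c^2*d^5*t + (3609792:K)*c*d^6*t^2 - (5443200:K)*c*d^6*t + (1564704:K)*d^7*t^2 + (961632:K)*d^7*t)*hc1
    have hbig : (221184 : K) ≠ 0 := by
      have hbe : (221184 : K) = 2 ^ 13 * 3 ^ 3 := by norm_num
      rw [hbe]
      exact mul_ne_zero (pow_ne_zero 13 H2) (pow_ne_zero 3 H3)
    exact (mul_ne_zero hbig (mul_ne_zero ht0 (pow_ne_zero 8 hd))) hx3

end
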